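/- Let G be a K_r-free graph and I_1, ..., I_{R(r,m)} independent sets of size n ≥ m in G. Then there is a rainbow independent m-set. (Proof idea: take an inclusion-maximal rainbow set M; either M has size R(r,m) and contains an independent m-set by Ramsey, or M contains some I_j entirely.) -/
import Mathlib


open SimpleGraph Finset

/-- `S` is an independent set in `G`. -/
def IndepIn {V : Type*} (G : SimpleGraph V) (S : Finset V) : Prop :=
  ∀ u ∈ S, ∀ v ∈ S, ¬ G.Adj u v

/-- The family `I` admits a rainbow independent `m`-set in `G`: `m` distinct pairwise
non-adjacent vertices, each chosen from a distinct member of the family. -/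
def HasRainbowIndep {V ι : Type*} (G : SimpleGraph V) (I : ι → Finset V) (m : ℕ) : Prop :=
  ∃ (j : Fin m → ι) (v : Fin m → V), Function.Injective j ∧ Function.Injective v ∧
    (∀ i, v i ∈ I (j i)) ∧ ∀ i i' : Fin m, i ≠ i' → ¬ G.Adj (v i) (v i')

/-- `G` contains no induced copy of `H`. -/
def IndFree {V W : Type*} (G : SimpleGraph V) (H : SimpleGraph W) : Prop :=
  ¬ ∃ f : W ↪ V, ∀ a b : W, G.Adj (f a) (f b) ↔ H.Adj a b

/-- `N` vertices suffice to find a clique of size `r` or an independent set of size `m`. -/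
def RamseyProp (N r m : ℕ) : Prop :=
  ∀ G : SimpleGraph (Fin N),
    (∃ S : Finset (Fin N), G.IsNClique r S) ∨
    (∃ S : Finset (Fin N), S.card = m ∧ ∀ u ∈ S, ∀ v ∈ S, ¬ G.Adj u v)

/-- The Ramsey number `R(r,m)`. -/
noncomputable def ramseyNum (r m : ℕ) : ℕ := sInf {N | RamseyProp N r m}

/-- Ramsey's theorem, over arbitrary finite vertex types. -/
lemma ramsey_aux : ∀ r m : ℕ, ∃ N : ℕ, ∀ (V : Type) [Fintype V] (G : SimpleGraph V),
    N ≤ Fintype.card V →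
    (∃ S : Finset V, G.IsNClique r S) ∨
    (∃ S : Finset V, S.card = m ∧ ∀ u ∈ S, ∀ v ∈ S, ¬ G.Adj u v) := by
  intro r
  induction r with
  | zero =>
    intro m
    exact ⟨0, fun V _ G _ => Or.inl ⟨∅, by simp [SimpleGraph.isNClique_empty]⟩⟩
  | succ r ihr =>
    intro m
    induction m with
    | zero =>
      exact ⟨0, fun V _ G _ => Or.inr ⟨∅, by simp⟩⟩
    | succ m ihm =>
      obtain ⟨N₁, h₁⟩ := ihr (m + 1)
      obtain ⟨N₂, h₂⟩ := ihm
      refine ⟨N₁ + N₂ + 1, ?_⟩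
      intro V _ G hcard
      classical
      have hne : Nonempty V := Fintype.card_pos_iff.mp (by omega)
      obtain ⟨v⟩ := hne
      set A : Finset V := univ.filter (fun u => G.Adj v u) with hA
      set B : Finset V := univ.filter (fun u => u ≠ v ∧ ¬ G.Adj v u) with hB
      have hAmem : ∀ u, u ∈ A ↔ G.Adj v u := by intro u; simp [hA]
      have hBmem : ∀ u, u ∈ B ↔ u ≠ v ∧ ¬ G.Adj v u := by intro u; simp [hB]
      have hcards : A.card + B.card + 1 = Fintype.card V := by
        have hdisj : Disjoint A B := by
          rw [Finset.disjoint_left]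
          intro u hu hu'
          exact ((hBmem u).mp hu').2 ((hAmem u).mp hu)
        have hvAB : v ∉ A ∪ B := by
          simp only [Finset.mem_union, hAmem, hBmem]
          rintro (h | h)
          · exact G.irrefl h
          · exact h.1 rfl
        have huniv : insert v (A ∪ B) = univ := by
          apply Finset.eq_univ_of_forall
          intro u
          simp only [Finset.mem_insert, Finset.mem_union, hAmem, hBmem]
          by_cases hu : u = v
          · exact Or.inl hu
          · by_cases hadj : G.Adj v u
            · exact Or.inr (Or.inl hadj)
            · exact Or.inr (Or.inr ⟨hu, hadj⟩)
        have := congrArg Finset.card huniv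
        rw [Finset.card_insert_of_notMem hvAB, Finset.card_union_of_disjoint hdisj,
          Finset.card_univ] at this
        omega
      have hsplit : N₁ ≤ A.card ∨ N₂ ≤ B.card := by omega
      rcases hsplit with hle | hle
      · -- many neighbors of v
        have hcardA : N₁ ≤ Fintype.card (↥A) := by rwa [Fintype.card_coe]
        rcases h₁ ↥A (G.comap (Subtype.val : ↥A → V)) hcardA with ⟨S, hS⟩ | ⟨S, hScard, hSind⟩
        · -- r-clique among neighbors; add v
          refine Or.inl ⟨insert v (S.map (Function.Embedding.subtype _)), ?_, ?_⟩
          · intro x hx y hy hxy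
            simp only [Finset.coe_insert, Set.mem_insert_iff, Finset.coe_map,
              Set.mem_image, Finset.mem_coe] at hx hy
            rcases hx with rfl | hx
            · rcases hy with rfl | hy
              · exact absurd rfl hxy
              · obtain ⟨b, hb, rfl⟩ := hy
                exact (hAmem _).mp b.2
            · obtain ⟨a, ha, rfl⟩ := hx
              rcases hy with rfl | hy
              · exact ((hAmem _).mp a.2).symm
              · obtain ⟨b, hb, rfl⟩ := hy
                have hab : a ≠ b := fun h => hxy (by rw [h])
                exact hS.1 ha hb hab
          · have hvS : v ∉ S.map (Function.Embedding.subtype _) := by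
              intro h
              obtain ⟨a, _, ha⟩ := Finset.mem_map.mp h
              have : G.Adj v v := by
                have := (hAmem _).mp a.2
                rwa [show (a : V) = v from ha] at this
              exact G.irrefl this
            rw [Finset.card_insert_of_notMem hvS, Finset.card_map, hS.2]
        · -- (m+1)-independent set among neighbors
          refine Or.inr ⟨S.map (Function.Embedding.subtype _), by rw [Finset.card_map, hScard], ?_⟩
          intro x hx y hy
          obtain ⟨a, ha, rfl⟩ := Finset.mem_map.mp hx
          obtain ⟨b, hb, rfl⟩ := Finset.mem_map.mp hy
          exact hSind a ha b hb
      · -- many non-neighbors of v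
        have hcardB : N₂ ≤ Fintype.card (↥B) := by rwa [Fintype.card_coe]
        rcases h₂ ↥B (G.comap (Subtype.val : ↥B → V)) hcardB with ⟨S, hS⟩ | ⟨S, hScard, hSind⟩
        · -- (r+1)-clique among non-neighbors lifts directly
          refine Or.inl ⟨S.map (Function.Embedding.subtype _), ?_, by rw [Finset.card_map, hS.2]⟩
          intro x hx y hy hxy
          simp only [Finset.coe_map, Set.mem_image, Finset.mem_coe] at hx hy
          obtain ⟨a, ha, rfl⟩ := hx
          obtain ⟨b, hb, rfl⟩ := hy
          have hab : a ≠ b := fun h => hxy (by rw [h])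
          exact hS.1 ha hb hab
        · -- m-independent set among non-neighbors; add v
          refine Or.inr ⟨insert v (S.map (Function.Embedding.subtype _)), ?_, ?_⟩
          · have hvS : v ∉ S.map (Function.Embedding.subtype _) := by
              intro h
              obtain ⟨a, _, ha⟩ := Finset.mem_map.mp h
              exact ((hBmem _).mp a.2).1 ha
            rw [Finset.card_insert_of_notMem hvS, Finset.card_map, hScard]
          · intro x hx y hy
            rcases Finset.mem_insert.mp hx with rfl | hx
            · rcases Finset.mem_insert.mp hy with rfl | hy
              · exact G.irrefl
              · obtain ⟨b, hb, rfl⟩ := Finset.mem_map.mp hy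
                exact ((hBmem _).mp b.2).2
            · obtain ⟨a, ha, rfl⟩ := Finset.mem_map.mp hx
              rcases Finset.mem_insert.mp hy with rfl | hy
              · exact fun h => ((hBmem _).mp a.2).2 h.symm
              · obtain ⟨b, hb, rfl⟩ := Finset.mem_map.mp hy
                exact hSind a ha b hb

lemma ramseyProp_ramseyNum (r m : ℕ) : RamseyProp (ramseyNum r m) r m := by
  obtain ⟨N, hN⟩ := ramsey_aux r m
  have hmem : N ∈ {N | RamseyProp N r m} := by
    intro G
    exact hN (Fin N) G (by simp)
  exact Nat.sInf_mem ⟨N, hmem⟩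

theorem cliqueFree_rainbow_upper {V : Type*} (G : SimpleGraph V) (r m n : ℕ) (hmn : m ≤ n)
    (hfree : G.CliqueFree r)
    (I : Fin (ramseyNum r m) → Finset V)
    (hI : ∀ i, (I i).card = n ∧ IndepIn G (I i)) :
    HasRainbowIndep G I m := by
  classical
  have hR : RamseyProp (ramseyNum r m) r m := ramseyProp_ramseyNum r m
  set P : ℕ → Prop := fun k => ∃ (j : Fin k → Fin (ramseyNum r m)) (v : Fin k → V),
    Function.Injective j ∧ Function.Injective v ∧ ∀ i, v i ∈ I (j i) with hP
  have hP0 : P 0 := ⟨Fin.elim0, Fin.elim0, fun a => a.elim0, fun a => a.elim0, fun a => a.elim0⟩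
  set K := Nat.findGreatest P (ramseyNum r m) with hK
  have hPK : P K := Nat.findGreatest_spec (Nat.zero_le _) hP0
  have hmax : ∀ k, K < k → k ≤ ramseyNum r m → ¬ P k :=
    fun k h1 h2 => Nat.findGreatest_is_greatest h1 h2
  have hKle : K ≤ ramseyNum r m := Nat.findGreatest_le _
  clear_value K
  obtain ⟨j, v, hj, hv, hmem⟩ := hPK
  by_cases hKN : K = ramseyNum r m
  · -- full rainbow set: apply Ramsey
    subst hKN
    rcases hR (G.comap v) with ⟨S, hS⟩ | ⟨S, hScard, hSind⟩
    · exfalso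
      refine hfree (S.map ⟨v, hv⟩) ⟨?_, by rw [Finset.card_map, hS.2]⟩
      intro x hx y hy hxy
      simp only [Finset.coe_map, Set.mem_image, Finset.mem_coe] at hx hy
      obtain ⟨a, ha, rfl⟩ := hx
      obtain ⟨b, hb, rfl⟩ := hy
      have hab : a ≠ b := fun h => hxy (by rw [h])
      exact hS.1 ha hb hab
    · obtain e := (Finset.equivFinOfCardEq hScard).symm
      refine ⟨fun i => j (e i), fun i => v (e i), ?_, ?_, fun i => hmem (e i), ?_⟩
      · exact hj.comp (Subtype.val_injective.comp e.injective)
      · exact hv.comp (Subtype.val_injective.comp e.injective)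
      · intro i i' _ hadj
        exact hSind (e i) (e i).2 (e i') (e i').2 hadj
  · -- some index i₀ unused; I i₀ is fully used up
    have hKlt : K < ramseyNum r m := lt_of_le_of_ne hKle hKN
    obtain ⟨i₀, hi₀⟩ : ∃ i₀, ∀ t, j t ≠ i₀ := by
      by_contra h
      push_neg at h
      exact hKN (by simpa using Fintype.card_of_bijective ⟨hj, fun b => h b⟩)
    have hsub : ∀ u ∈ I i₀, ∃ t, v t = u := by
      by_contra h
      push_neg at h
      obtain ⟨u, hu, hnew⟩ := h
      apply hmax (K + 1) (Nat.lt_succ_self K) hKlt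
      refine ⟨Fin.cons i₀ j, Fin.cons u v, ?_, ?_, ?_⟩
      · refine Fin.cons_injective_of_injective ?_ hj
        rintro ⟨t, ht⟩
        exact hi₀ t ht
      · refine Fin.cons_injective_of_injective ?_ hv
        rintro ⟨t, ht⟩
        exact hnew t ht
      · intro i
        refine Fin.cases ?_ ?_ i
        · simpa using hu
        · intro t
          simpa using hmem t
    -- extract m elements of I i₀
    obtain ⟨T, hTsub, hTcard⟩ := Finset.exists_subset_card_eq (s := I i₀) (n := m) (by rw [(hI i₀).1]; exact hmn)
    obtain e := (Finset.equivFinOfCardEq hTcard).symm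
    choose w hw using fun i : Fin m => hsub (e i) (hTsub (e i).2)
    refine ⟨fun i => j (w i), fun i => (e i : V), ?_, ?_, ?_, ?_⟩
    · refine hj.comp ?_
      intro a b hab
      have : v (w a) = v (w b) := by rw [hab]
      rw [hw a, hw b] at this
      exact e.injective (Subtype.val_injective this)
    · exact Subtype.val_injective.comp e.injective
    · intro i
      show (e i : V) ∈ I (j (w i))
      rw [← hw i]
      exact hmem (w i)
    · intro i i' _
      exact (hI i₀).2 (e i) (hTsub (e i).2) (e i') (hTsub (e i').2)
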